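/- arXiv:2512.01791 — 7 statements merged into one kernel-verified Lean document; each statement's English description precedes it below -/
import Mathlib

section
/- If X is an n×n matrix with trace zero and N is a symmetric n×n matrix of commuting polynomial variables, then the derivation sending each entry n_{ij} to the (i,j) entry of X·N + N·Xᵀ annihilates det(N). -/
/-!
Jacobi's formula holds for any derivation: `D (det A) = tr (adj A · D A)`. With
`D N = X N + N Xᵀ` and `N · adj N = adj N · N = det N · 1`, cyclicity of the trace gives
`D (det N) = 2 · det N · tr X`, which vanishes for traceless `X`.
-/

open Matrix

namespace Derivation

variable {R A M : Type*} [CommSemiring R] [CommSemiring A] [AddCommMonoid M]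
  [Algebra R A] [Module A M] [Module R M]

theorem map_finset_prod {ι : Type*} [DecidableEq ι] (D : Derivation R A M) (s : Finset ι)
    (f : ι → A) : D (∏ i ∈ s, f i) = ∑ i ∈ s, (∏ j ∈ s.erase i, f j) • D (f i) := by
  induction s using Finset.induction_on with
  | empty => simp
  | insert a s ha ih =>
    rw [Finset.prod_insert ha, D.leibniz, ih, Finset.sum_insert ha, Finset.erase_insert ha,
      Finset.smul_sum, add_comm]
    congr 1
    refine Finset.sum_congr rfl fun i hi => ?_
    have hia : i ≠ a := fun h => ha (h ▸ hi)
    rw [Finset.erase_insert_of_ne hia.symm,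
      Finset.prod_insert fun h => ha (Finset.mem_of_mem_erase h), smul_smul]

end Derivation

section Jacobi

variable {R S n : Type*} [CommRing R] [CommRing S] [Algebra R S] [Fintype n] [DecidableEq n]

theorem Derivation.map_det_eq_sum_det_updateCol (D : Derivation R S S) (A : Matrix n n S) :
    D A.det = ∑ i, (A.updateCol i fun k => D (A k i)).det := by
  have hcol (i : n) (σ : Equiv.Perm n) :
      ∏ j, (A.updateCol i fun k => D (A k i)) (σ j) j
        = (∏ j ∈ Finset.univ.erase i, A (σ j) j) * D (A (σ i) i) := by
    rw [← Finset.prod_erase_mul _ _ (Finset.mem_univ i), updateCol_self]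
    congr 1
    exact Finset.prod_congr rfl fun j hj => updateCol_ne (Finset.ne_of_mem_erase hj)
  simp_rw [det_apply, map_sum, Units.smul_def, map_zsmul, D.map_finset_prod, smul_eq_mul, hcol,
    Finset.smul_sum]
  exact Finset.sum_comm

theorem Derivation.map_det_eq_trace_adjugate_mul (D : Derivation R S S) (A : Matrix n n S) :
    D A.det = (adjugate A * A.map D).trace := by
  rw [D.map_det_eq_sum_det_updateCol]
  refine Finset.sum_congr rfl fun i _ => ?_
  rw [← cramer_apply, cramer_eq_adjugate_mulVec]
  rfl

end Jacobi

theorem Matrix.trace_adjugate_mul_mul_add_mul_transpose {n S : Type*} [Fintype n]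
    [DecidableEq n] [CommRing S] (A X : Matrix n n S) :
    (adjugate A * (X * A + A * Xᵀ)).trace = 2 * A.det * X.trace := by
  rw [mul_add, trace_add, trace_mul_comm, Matrix.mul_assoc, mul_adjugate, ← Matrix.mul_assoc,
    adjugate_mul, Matrix.mul_smul, Matrix.smul_mul, Matrix.mul_one, Matrix.one_mul, trace_smul,
    trace_smul, trace_transpose, smul_eq_mul]
  ring

/-- Infinitesimal `SL_n`-invariance of the determinant of a symmetric matrix of
independent variables: if `X` is traceless and `D` is the derivation of the polynomial
ring in the variables `n_{ij}` (indexed by unordered pairs, so that the matrix `N` of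
variables is symmetric) with `D(n_{ij}) = (X·N + N·Xᵀ)_{ij}`, then `D (det N) = 0`. -/
theorem stmt_1 {K : Type*} [Field K] {n : ℕ}
    (M : Matrix (Fin n) (Fin n) K) (hM : M.trace = 0)
    (N R : Matrix (Fin n) (Fin n) (MvPolynomial (Sym2 (Fin n)) K))
    (hN : ∀ i j, N i j = MvPolynomial.X (Sym2.mk i j))
    (hR : R = M.map MvPolynomial.C * N + N * (M.map MvPolynomial.C)ᵀ)
    (D : Derivation K (MvPolynomial (Sym2 (Fin n)) K) (MvPolynomial (Sym2 (Fin n)) K))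
    (hD : ∀ i j : Fin n, D (MvPolynomial.X (Sym2.mk i j)) = R i j) :
    D N.det = 0 := by
  have hDN : N.map D = R := by
    ext i j
    rw [map_apply, hN, hD]
  have htrace : (M.map MvPolynomial.C).trace = (0 : MvPolynomial (Sym2 (Fin n)) K) := by
    rw [← AddMonoidHom.map_trace, hM, map_zero]
  rw [D.map_det_eq_trace_adjugate_mul, hDN, hR, trace_adjugate_mul_mul_add_mul_transpose, htrace,
    mul_zero]
end

section
/- The subspace of sl_{2(n-1)}(K) consisting of block matrices X = [[0,0,0],[P,A,0],[M,Q,0]] with A a 2×2 traceless matrix, P an arbitrary 2×(n-2) block (written as (n-2) columns of height 2 in appropriate positions), Q = Pᵀ J with J = [[0,1],[-1,0]], and M an (n-2)×(n-2) symmetric matrix, is closed under the matrix commutator, i.e. it is a Lie subalgebra of sl_{2(n-1)}(K). -/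
open Matrix

/-- The standard 2×2 symplectic matrix `J = [[0,1],[-1,0]]`. -/
def Jmat (K : Type*) [Field K] : Matrix (Fin 2) (Fin 2) K := !![0, 1; -1, 0]

/-- The block matrix `X = [[0,0,0],[P,A,0],[M,Q,0]]` with `Q = Pᵀ J`, where the
`2(n-1)` row/column indices are partitioned into blocks of sizes `n-2`, `2`, `n-2`. -/
def blockX {K : Type*} [Field K] {m : ℕ}
    (A : Matrix (Fin 2) (Fin 2) K) (P : Matrix (Fin 2) (Fin m) K)
    (M : Matrix (Fin m) (Fin m) K) :
    Matrix (Fin m ⊕ (Fin 2 ⊕ Fin m)) (Fin m ⊕ (Fin 2 ⊕ Fin m)) K :=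
  Matrix.of fun i j =>
    match i, j with
    | Sum.inl _, _ => 0
    | Sum.inr (Sum.inl a), Sum.inl i => P a i
    | Sum.inr (Sum.inl a), Sum.inr (Sum.inl b) => A a b
    | Sum.inr (Sum.inl _), Sum.inr (Sum.inr _) => 0
    | Sum.inr (Sum.inr r), Sum.inl i => M r i
    | Sum.inr (Sum.inr r), Sum.inr (Sum.inl b) => (Pᵀ * Jmat K) r b
    | Sum.inr (Sum.inr _), Sum.inr (Sum.inr _) => 0


section Aux
variable {K : Type*} [Field K] {m : ℕ} (A : Matrix (Fin 2) (Fin 2) K)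
  (P : Matrix (Fin 2) (Fin m) K) (M : Matrix (Fin m) (Fin m) K)

@[simp] lemma blockX_inl (i : Fin m) (j : Fin m ⊕ (Fin 2 ⊕ Fin m)) :
    blockX A P M (Sum.inl i) j = 0 := rfl
@[simp] lemma blockX_mid_inl (a : Fin 2) (i : Fin m) :
    blockX A P M (Sum.inr (Sum.inl a)) (Sum.inl i) = P a i := rfl
@[simp] lemma blockX_mid_mid (a b : Fin 2) :
    blockX A P M (Sum.inr (Sum.inl a)) (Sum.inr (Sum.inl b)) = A a b := rfl
@[simp] lemma blockX_mid_bot (a : Fin 2) (r : Fin m) :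
    blockX A P M (Sum.inr (Sum.inl a)) (Sum.inr (Sum.inr r)) = 0 := rfl
@[simp] lemma blockX_bot_inl (r : Fin m) (i : Fin m) :
    blockX A P M (Sum.inr (Sum.inr r)) (Sum.inl i) = M r i := rfl
@[simp] lemma blockX_bot_mid (r : Fin m) (b : Fin 2) :
    blockX A P M (Sum.inr (Sum.inr r)) (Sum.inr (Sum.inl b)) = (Pᵀ * Jmat K) r b := rfl
@[simp] lemma blockX_bot_bot (r s : Fin m) :
    blockX A P M (Sum.inr (Sum.inr r)) (Sum.inr (Sum.inr s)) = 0 := rfl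

end Aux

/-- The subspace of `sl_{2(n-1)}(K)` consisting of the block matrices
`X = [[0,0,0],[P,A,0],[M,Q,0]]` with `A` traceless, `Q = Pᵀ J` and `M` symmetric is
closed under the matrix commutator, i.e. it is a Lie subalgebra. -/
theorem stmt_2 {K : Type*} [Field K] {n : ℕ} (hn : 3 ≤ n)
    (A A' : Matrix (Fin 2) (Fin 2) K) (P P' : Matrix (Fin 2) (Fin (n - 2)) K)
    (M M' : Matrix (Fin (n - 2)) (Fin (n - 2)) K)
    (hA : A.trace = 0) (hA' : A'.trace = 0) (hM : M.IsSymm) (hM' : M'.IsSymm) :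
    (blockX A P M).trace = 0 ∧
    ∃ (A'' : Matrix (Fin 2) (Fin 2) K) (P'' : Matrix (Fin 2) (Fin (n - 2)) K)
      (M'' : Matrix (Fin (n - 2)) (Fin (n - 2)) K),
      A''.trace = 0 ∧ M''.IsSymm ∧
      blockX A P M * blockX A' P' M' - blockX A' P' M' * blockX A P M =
        blockX A'' P'' M'' := by
  have hAe : A 0 0 + A 1 1 = 0 := by rwa [Matrix.trace_fin_two] at hA
  have hAe' : A' 0 0 + A' 1 1 = 0 := by rwa [Matrix.trace_fin_two] at hA'
  refine ⟨?_, A * A' - A' * A, A * P' - A' * P,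
      Pᵀ * Jmat K * P' - P'ᵀ * Jmat K * P, ?_, ?_, ?_⟩
  · simpa [Matrix.trace, Matrix.diag, blockX, Fintype.sum_sum_type,
      Fin.sum_univ_two] using hAe
  · simp [Matrix.trace_sub, Matrix.trace_mul_comm A A']
  · have hJ : (Jmat K)ᵀ = -(Jmat K) := by
      ext i j; fin_cases i <;> fin_cases j <;> simp [Jmat]
    unfold Matrix.IsSymm
    rw [Matrix.transpose_sub, Matrix.transpose_mul, Matrix.transpose_mul,
      Matrix.transpose_mul, Matrix.transpose_mul, Matrix.transpose_transpose,
      Matrix.transpose_transpose, hJ]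
    simp only [Matrix.mul_neg, Matrix.neg_mul, sub_neg_eq_add, Matrix.mul_assoc]
    abel
  · ext i j
    rcases i with i | i | i <;> rcases j with j | j | j <;>
      simp only [Matrix.sub_apply, Matrix.mul_apply, Fintype.sum_sum_type,
        Fin.sum_univ_two, blockX_inl, blockX_mid_inl, blockX_mid_mid,
        blockX_mid_bot, blockX_bot_inl, blockX_bot_mid, blockX_bot_bot,
        Matrix.transpose_apply, mul_zero, zero_mul, add_zero, zero_add,
        Finset.sum_const_zero, sub_self, sub_zero, zero_sub, neg_zero]
    fin_cases j <;> simp [Jmat] <;>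
      [linear_combination P' 1 i * hAe - P 1 i * hAe';
       linear_combination P 0 i * hAe' - P' 0 i * hAe]
end

section
/- The polynomial C₃ = 2x₊y₋² − 2x₋y₊² + 2h·y₋y₊ + z(h² + 4x₋x₊) is annihilated by each of the derivations of K[h,x₋,x₊,y₋,y₊,z] defined by: X_h: x₋ ↦ −2x₋, x₊ ↦ 2x₊, y₊ ↦ y₊, y₋ ↦ −y₋ (other generators ↦ 0); X₋: h ↦ 2x₋, x₊ ↦ −h, y₊ ↦ y₋ (others ↦ 0); X₊: h ↦ −2x₊, x₋ ↦ h, y₋ ↦ y₊ (others ↦ 0); Y₋: h ↦ y₋, x₊ ↦ −y₊, y₊ ↦ −z (others ↦ 0); Y₊: h ↦ −y₊, x₋ ↦ −y₋, y₋ ↦ z (others ↦ 0). -/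
open MvPolynomial

/-! A derivation of a polynomial ring is determined by its values on the variables, through
the chain rule `D p = ∑ᵢ ∂ᵢp · D(Xᵢ)`. So it suffices to expand `D C₃` once, for an arbitrary
derivation, and check that the gradient of `C₃` is orthogonal to each of the five coadjoint
vector fields; each check is a polynomial identity. -/

theorem Derivation.map_ofNat {R A M : Type*} [CommSemiring R] [CommSemiring A] [Algebra R A]
    [AddCommMonoid M] [Module A M] [Module R M] (D : Derivation R A M) (n : ℕ) [n.AtLeastTwo] :
    D (ofNat(n) : A) = 0 :=
  D.map_natCast n

namespace TwoPhoton

variable {R : Type*} [CommRing R]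

noncomputable def casimir : MvPolynomial (Fin 6) R :=
  2 * X 2 * X 3 ^ 2 - 2 * X 1 * X 4 ^ 2 + 2 * X 0 * X 3 * X 4 +
    X 5 * (X 0 ^ 2 + 4 * X 1 * X 2)

theorem derivation_casimir (D : Derivation R (MvPolynomial (Fin 6) R) (MvPolynomial (Fin 6) R)) :
    D casimir =
      (2 * X 3 * X 4 + 2 * X 0 * X 5) * D (X 0) + (4 * X 2 * X 5 - 2 * X 4 ^ 2) * D (X 1) +
        (2 * X 3 ^ 2 + 4 * X 1 * X 5) * D (X 2) + (4 * X 2 * X 3 + 2 * X 0 * X 4) * D (X 3) +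
        (2 * X 0 * X 3 - 4 * X 1 * X 4) * D (X 4) + (X 0 ^ 2 + 4 * X 1 * X 2) * D (X 5) := by
  simp only [casimir, map_add, map_sub, Derivation.leibniz, Derivation.leibniz_pow,
    Derivation.map_ofNat, smul_eq_mul, nsmul_eq_mul]
  ring

end TwoPhoton

theorem stmt_12_general {K : Type*} [Field K]
    (Dh DXm DXp DYm DYp :
      Derivation K (MvPolynomial (Fin 6) K) (MvPolynomial (Fin 6) K))
    -- X_h : x₋ ↦ −2x₋, x₊ ↦ 2x₊, y₋ ↦ −y₋, y₊ ↦ y₊, others ↦ 0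
    (h0 : Dh (X 0) = 0) (h1 : Dh (X 1) = -(2 * X 1)) (h2 : Dh (X 2) = 2 * X 2)
    (h3 : Dh (X 3) = -X 3) (h4 : Dh (X 4) = X 4) (h5 : Dh (X 5) = 0)
    -- X₋ : h ↦ 2x₋, x₊ ↦ −h, y₊ ↦ y₋, others ↦ 0
    (m0 : DXm (X 0) = 2 * X 1) (m1 : DXm (X 1) = 0) (m2 : DXm (X 2) = -X 0)
    (m3 : DXm (X 3) = 0) (m4 : DXm (X 4) = X 3) (m5 : DXm (X 5) = 0)
    -- X₊ : h ↦ −2x₊, x₋ ↦ h, y₋ ↦ y₊, others ↦ 0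
    (p0 : DXp (X 0) = -(2 * X 2)) (p1 : DXp (X 1) = X 0) (p2 : DXp (X 2) = 0)
    (p3 : DXp (X 3) = X 4) (p4 : DXp (X 4) = 0) (p5 : DXp (X 5) = 0)
    -- Y₋ : h ↦ y₋, x₊ ↦ −y₊, y₊ ↦ −z, others ↦ 0
    (ym0 : DYm (X 0) = X 3) (ym1 : DYm (X 1) = 0) (ym2 : DYm (X 2) = -X 4)
    (ym3 : DYm (X 3) = 0) (ym4 : DYm (X 4) = -X 5) (ym5 : DYm (X 5) = 0)
    -- Y₊ : h ↦ −y₊, x₋ ↦ −y₋, y₋ ↦ z, others ↦ 0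
    (yp0 : DYp (X 0) = -X 4) (yp1 : DYp (X 1) = -X 3) (yp2 : DYp (X 2) = 0)
    (yp3 : DYp (X 3) = X 5) (yp4 : DYp (X 4) = 0) (yp5 : DYp (X 5) = 0)
    (C₃ : MvPolynomial (Fin 6) K)
    (hC : C₃ = 2 * X 2 * X 3 ^ 2 - 2 * X 1 * X 4 ^ 2 + 2 * X 0 * X 3 * X 4 +
        X 5 * (X 0 ^ 2 + 4 * X 1 * X 2)) :
    Dh C₃ = 0 ∧ DXm C₃ = 0 ∧ DXp C₃ = 0 ∧ DYm C₃ = 0 ∧ DYp C₃ = 0 := by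
  rw [hC, ← TwoPhoton.casimir]
  refine ⟨?_, ?_, ?_, ?_, ?_⟩
  · rw [TwoPhoton.derivation_casimir, h0, h1, h2, h3, h4, h5]; ring
  · rw [TwoPhoton.derivation_casimir, m0, m1, m2, m3, m4, m5]; ring
  · rw [TwoPhoton.derivation_casimir, p0, p1, p2, p3, p4, p5]; ring
  · rw [TwoPhoton.derivation_casimir, ym0, ym1, ym2, ym3, ym4, ym5]; ring
  · rw [TwoPhoton.derivation_casimir, yp0, yp1, yp2, yp3, yp4, yp5]; ring

/-- The degree-three Casimir `C₃ = 2x₊y₋² − 2x₋y₊² + 2h·y₋y₊ + z(h² + 4x₋x₊)` of the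
two-photon Lie algebra is annihilated by each of the coadjoint derivations
`X_h, X₋, X₊, Y₋, Y₊` of `K[h, x₋, x₊, y₋, y₊, z]` (variables `X 0, …, X 5`). -/
theorem stmt_12 {K : Type*} [Field K] [CharZero K]
    (Dh DXm DXp DYm DYp :
      Derivation K (MvPolynomial (Fin 6) K) (MvPolynomial (Fin 6) K))
    -- X_h : x₋ ↦ −2x₋, x₊ ↦ 2x₊, y₋ ↦ −y₋, y₊ ↦ y₊, others ↦ 0
    (h0 : Dh (X 0) = 0) (h1 : Dh (X 1) = -(2 * X 1)) (h2 : Dh (X 2) = 2 * X 2)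
    (h3 : Dh (X 3) = -X 3) (h4 : Dh (X 4) = X 4) (h5 : Dh (X 5) = 0)
    -- X₋ : h ↦ 2x₋, x₊ ↦ −h, y₊ ↦ y₋, others ↦ 0
    (m0 : DXm (X 0) = 2 * X 1) (m1 : DXm (X 1) = 0) (m2 : DXm (X 2) = -X 0)
    (m3 : DXm (X 3) = 0) (m4 : DXm (X 4) = X 3) (m5 : DXm (X 5) = 0)
    -- X₊ : h ↦ −2x₊, x₋ ↦ h, y₋ ↦ y₊, others ↦ 0
    (p0 : DXp (X 0) = -(2 * X 2)) (p1 : DXp (X 1) = X 0) (p2 : DXp (X 2) = 0)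
    (p3 : DXp (X 3) = X 4) (p4 : DXp (X 4) = 0) (p5 : DXp (X 5) = 0)
    -- Y₋ : h ↦ y₋, x₊ ↦ −y₊, y₊ ↦ −z, others ↦ 0
    (ym0 : DYm (X 0) = X 3) (ym1 : DYm (X 1) = 0) (ym2 : DYm (X 2) = -X 4)
    (ym3 : DYm (X 3) = 0) (ym4 : DYm (X 4) = -X 5) (ym5 : DYm (X 5) = 0)
    -- Y₊ : h ↦ −y₊, x₋ ↦ −y₋, y₋ ↦ z, others ↦ 0
    (yp0 : DYp (X 0) = -X 4) (yp1 : DYp (X 1) = -X 3) (yp2 : DYp (X 2) = 0)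
    (yp3 : DYp (X 3) = X 5) (yp4 : DYp (X 4) = 0) (yp5 : DYp (X 5) = 0)
    (C₃ : MvPolynomial (Fin 6) K)
    (hC : C₃ = 2 * X 2 * X 3 ^ 2 - 2 * X 1 * X 4 ^ 2 + 2 * X 0 * X 3 * X 4 +
        X 5 * (X 0 ^ 2 + 4 * X 1 * X 2)) :
    Dh C₃ = 0 ∧ DXm C₃ = 0 ∧ DXp C₃ = 0 ∧ DYm C₃ = 0 ∧ DYp C₃ = 0 :=
  stmt_12_general Dh DXm DXp DYm DYp h0 h1 h2 h3 h4 h5 m0 m1 m2 m3 m4 m5 p0 p1 p2 p3 p4 p5 ym0 ym1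
    ym2 ym3 ym4 ym5 yp0 yp1 yp2 yp3 yp4 yp5 C₃ hC
end

section
/- For x = a·h + b·x₊ + c·x₋ + Σᵢ (dᵢ y_{i,+} + eᵢ y_{i,-}) in g_n, with A = [[a,b],[c,−a]] and P the 2×(n−2) matrix with rows (d₁,…,d_{n−2}) and (e₁,…,e_{n−2}), the adjoint action of x on the symmetric matrix M_n = [[S,U],[Uᵀ,R]] (applied entrywise) equals −(ρ̄(x)·M_n + M_n·ρ̄(x)ᵀ), where ρ̄(x) is the n×n block matrix [[0,0],[P,A]] (with 0 the (n−2)×(n−2) zero block), S = (z_{i,j}) is the symmetric (n−2)×(n−2) matrix of central generators, U has rows (−y_{i,-}, y_{i,+}), and R = [[−2x₋, h],[h, 2x₊]]. -/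
open Matrix

/-- Lemma (adjoint action on the Casimir matrix `M_n`): in a Lie algebra over `K`
containing elements `h, x₊, x₋, y_{i,±}` (`i ∈ Fin (n-2)`) and central `z_{i,j}`
satisfying the `g_n` commutation relations, for
`x = a·h + b·x₊ + c·x₋ + Σᵢ (dᵢ y_{i,+} + eᵢ y_{i,-})` the entrywise adjoint action of
`x` on the symmetric matrix `M_n = [[S,U],[Uᵀ,R]]` equals
`−(ρ̄(x)·M_n + M_n·ρ̄(x)ᵀ)`, where `ρ̄(x) = [[0,0],[P,A]]`, `A = [[a,b],[c,−a]]` and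
`P` has rows `(d₁,…,d_{n−2})`, `(e₁,…,e_{n−2})`. The index type `Fin (n-2) ⊕ Fin 2`
encodes the block structure; scalar-matrix products are written entrywise via `•`. -/
theorem stmt_14 {K : Type*} [Field K] {L : Type*} [LieRing L] [LieAlgebra K L]
    {n : ℕ} (hn : 3 ≤ n)
    (h xp xm : L) (yp ym : Fin (n - 2) → L) (z : Fin (n - 2) → Fin (n - 2) → L)
    -- the commutation relations of g_n
    (rel1 : ⁅xp, xm⁆ = h)
    (rel2 : ⁅h, xp⁆ = (2 : K) • xp) (rel3 : ⁅h, xm⁆ = -((2 : K) • xm))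
    (rel4 : ∀ i, ⁅h, yp i⁆ = yp i) (rel5 : ∀ i, ⁅h, ym i⁆ = -ym i)
    (rel6 : ∀ i, ⁅xm, yp i⁆ = ym i) (rel7 : ∀ i, ⁅xp, ym i⁆ = yp i)
    (rel8 : ∀ i, ⁅xm, ym i⁆ = 0) (rel9 : ∀ i, ⁅xp, yp i⁆ = 0)
    (rel10 : ∀ i j, ⁅yp i, ym j⁆ = z i j)
    (rel11 : ∀ i j, ⁅yp i, yp j⁆ = 0) (rel12 : ∀ i j, ⁅ym i, ym j⁆ = 0)
    (zsymm : ∀ i j, z i j = z j i)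
    (zcentral : ∀ i j (w : L), ⁅z i j, w⁆ = 0)
    -- the element x and the data defining ρ̄(x)
    (a b c : K) (d e : Fin (n - 2) → K)
    (x : L)
    (hx : x = a • h + b • xp + c • xm + ∑ i, (d i • yp i + e i • ym i))
    (ρ : Matrix (Fin (n - 2) ⊕ Fin 2) (Fin (n - 2) ⊕ Fin 2) K)
    (hρ : ρ = Matrix.of fun i j =>
      match i, j with
      | Sum.inl _, _ => 0
      | Sum.inr r, Sum.inl i => !![d i; e i] r 0
      | Sum.inr r, Sum.inr s => !![a, b; c, -a] r s)
    (M : Matrix (Fin (n - 2) ⊕ Fin 2) (Fin (n - 2) ⊕ Fin 2) L)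
    (hM : M = Matrix.of fun i j =>
      match i, j with
      | Sum.inl i, Sum.inl j => z i j
      | Sum.inl i, Sum.inr s => !![-ym i; yp i] s 0
      | Sum.inr r, Sum.inl j => !![-ym j; yp j] r 0
      | Sum.inr r, Sum.inr s => !![-((2 : K) • xm), h; h, (2 : K) • xp] r s) :
    ∀ i j, ⁅x, M i j⁆ =
      -((∑ k, ρ i k • M k j) + (∑ k, ρ j k • M i k)) := by
  intro i j
  have sum_lie' : ∀ (f : Fin (n - 2) → L) (g : L), ⁅∑ k, f k, g⁆ = ∑ k, ⁅f k, g⁆ := by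
    intro f g
    induction (Finset.univ : Finset (Fin (n - 2))) using Finset.induction_on with
    | empty => simp
    | insert _ _ h ih => simp [Finset.sum_insert h, add_lie, ih]
  have zc : ∀ p q (w : L), ⁅(w : L), z p q⁆ = 0 := fun p q w => by
    rw [← lie_skew, zcentral, neg_zero]
  have key : ∀ g : L, ⁅x, g⁆ =
      a • ⁅h, g⁆ + b • ⁅xp, g⁆ + c • ⁅xm, g⁆ +
        ∑ k, (d k • ⁅yp k, g⁆ + e k • ⁅ym k, g⁆) := by
    intro g
    rw [hx]
    simp [add_lie, smul_lie, sum_lie']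
  have bz : ∀ p q, ⁅x, z p q⁆ = 0 := by
    intro p q; rw [key]; simp [zc]
  have bym : ∀ p, ⁅x, ym p⁆ = -(a • ym p) + b • yp p + ∑ k, d k • z k p := by
    intro p
    rw [key]
    simp [rel5, rel7, rel8, rel10, rel12, smul_neg]
  have byp : ∀ p, ⁅x, yp p⁆ = a • yp p + c • ym p - ∑ k, e k • z p k := by
    intro p
    have hr : ∀ k, ⁅ym k, yp p⁆ = -(z p k) := fun k => by
      rw [← lie_skew, rel10]
    rw [key]
    simp [rel4, rel6, rel9, rel11, hr, smul_neg, Finset.sum_neg_distrib, sub_eq_add_neg]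
  have bh : ⁅x, h⁆ = -(b • (2:K) • xp) + c • (2:K) • xm
      + ∑ k, (-(d k • yp k) + e k • ym k) := by
    have h1 : ⁅xp, h⁆ = -((2:K) • xp) := by rw [← lie_skew, rel2]
    have h2 : ⁅xm, h⁆ = (2:K) • xm := by rw [← lie_skew, rel3, neg_neg]
    have h3 : ∀ k, ⁅yp k, h⁆ = -(yp k) := fun k => by rw [← lie_skew, rel4]
    have h4 : ∀ k, ⁅ym k, h⁆ = ym k := fun k => by rw [← lie_skew, rel5, neg_neg]
    rw [key]
    simp [h1, h2, h3, h4, smul_neg]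
  have bxp : ⁅x, xp⁆ = a • (2:K) • xp - c • h - ∑ k, e k • yp k := by
    have h1 : ⁅xm, xp⁆ = -h := by rw [← lie_skew, rel1]
    have h2 : ∀ k, ⁅ym k, xp⁆ = -(yp k) := fun k => by rw [← lie_skew, rel7]
    have h3 : ∀ k, ⁅yp k, xp⁆ = 0 := fun k => by rw [← lie_skew, rel9, neg_zero]
    rw [key]
    simp [rel2, h1, h2, h3, smul_neg, sub_eq_add_neg]
  have bxm : ⁅x, xm⁆ = -(a • (2:K) • xm) + b • h - ∑ k, d k • ym k := by
    have h1 : ∀ k, ⁅yp k, xm⁆ = -(ym k) := fun k => by rw [← lie_skew, rel6]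
    have h2 : ∀ k, ⁅ym k, xm⁆ = 0 := fun k => by rw [← lie_skew, rel8, neg_zero]
    rw [key]
    simp [rel3, rel1, h1, h2, smul_neg, sub_eq_add_neg]
  have flip : ∀ (p : Fin (n - 2)) (f : Fin (n - 2) → K),
      (∑ k, f k • z k p) = ∑ k, f k • z p k :=
    fun p f => Finset.sum_congr rfl fun k _ => by rw [zsymm k p]
  subst hρ hM
  rcases i with i | r <;> rcases j with j | s
  · simp [bz, Fintype.sum_sum_type, Fin.sum_univ_two]
  · fin_cases s <;>
      simp [Fintype.sum_sum_type, Fin.sum_univ_two, bym, byp, smul_neg,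
        Finset.sum_neg_distrib, zc, bz, flip, sub_eq_add_neg] <;> abel
  · fin_cases r <;>
      simp [Fintype.sum_sum_type, Fin.sum_univ_two, bym, byp, smul_neg,
        Finset.sum_neg_distrib, zc, bz, flip, sub_eq_add_neg] <;> abel
  · fin_cases r <;> fin_cases s <;>
      simp [Fintype.sum_sum_type, Fin.sum_univ_two, bh, bxp, bxm, smul_neg,
        smul_smul, Finset.sum_add_distrib, Finset.sum_neg_distrib] <;>
    module
end

section
/- On ℝ^{2N} with canonical Poisson bracket, the functions L_{ij} = q_i p_j − q_j p_i satisfy: for each m, the function C^{(m)} = Σ_{1≤i<j≤m} L_{ij}² Poisson-commutes with C^{(m')} for all m, m' ≤ N, and each C^{(m)} Poisson-commutes with H = Σₖ qₖpₖ, with Q = Σₖ qₖ², and with P = Σₖ pₖ². -/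
open MvPolynomial

namespace Stmt15

variable (N : ℕ)

/-- Polynomial functions on `ℝ^{2N}`: `q k = X (inl k)`, `p k = X (inr k)`. -/
abbrev Poly (N : ℕ) := MvPolynomial (Fin N ⊕ Fin N) ℝ

/-- Canonical Poisson bracket `{f,g} = Σₖ (f_{qₖ} g_{pₖ} − g_{qₖ} f_{pₖ})`. -/
noncomputable def pb (f g : Poly N) : Poly N :=
  ∑ k : Fin N, (pderiv (Sum.inl k) f * pderiv (Sum.inr k) g -
    pderiv (Sum.inl k) g * pderiv (Sum.inr k) f)

/-- Angular momentum component `L_{ij} = q_i p_j − q_j p_i`. -/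
noncomputable def Lang (i j : Fin N) : Poly N :=
  X (Sum.inl i) * X (Sum.inr j) - X (Sum.inl j) * X (Sum.inr i)

/-- Left coalgebra Casimir `C^{(m)} = Σ_{1 ≤ i < j ≤ m} L_{ij}²` (indices `1,…,m`
correspond to the 0-based indices `0,…,m-1`). -/
noncomputable def Cm (m : ℕ) : Poly N :=
  ∑ i : Fin N, ∑ j : Fin N, if i < j ∧ (j : ℕ) < m then Lang N i j ^ 2 else 0

end Stmt15

namespace Stmt15

variable {N : ℕ}

lemma pb_sum_left {ι : Type*} (s : Finset ι) (f : ι → Poly N) (g : Poly N) :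
    pb N (∑ i ∈ s, f i) g = ∑ i ∈ s, pb N (f i) g := by
  unfold pb
  rw [Finset.sum_comm]
  refine Finset.sum_congr rfl fun k _ => ?_
  simp [map_sum, Finset.sum_mul, Finset.mul_sum, Finset.sum_sub_distrib]

lemma pb_sum_right {ι : Type*} (s : Finset ι) (f : Poly N) (g : ι → Poly N) :
    pb N f (∑ i ∈ s, g i) = ∑ i ∈ s, pb N f (g i) := by
  unfold pb
  rw [Finset.sum_comm]
  refine Finset.sum_congr rfl fun k _ => ?_
  simp [map_sum, Finset.mul_sum, Finset.sum_mul, Finset.sum_sub_distrib]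

lemma pb_ite_left (c : Prop) [Decidable c] (f g : Poly N) :
    pb N (if c then f else 0) g = if c then pb N f g else 0 := by
  split_ifs with h
  · rfl
  · simp [pb]

lemma pb_ite_right (c : Prop) [Decidable c] (f g : Poly N) :
    pb N f (if c then g else 0) = if c then pb N f g else 0 := by
  split_ifs with h
  · rfl
  · simp [pb]

lemma pb_antisymm (f g : Poly N) : pb N f g = - pb N g f := by
  unfold pb
  rw [← Finset.sum_neg_distrib]
  refine Finset.sum_congr rfl fun k _ => ?_
  ring

lemma pb_sq_sq (f g : Poly N) :
    pb N (f ^ 2) (g ^ 2) = 4 * (f * g * pb N f g) := by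
  unfold pb
  simp only [Finset.mul_sum]
  refine Finset.sum_congr rfl fun k _ => ?_
  simp only [pderiv_pow]
  push_cast
  ring

lemma pb_sq_left (f g : Poly N) :
    pb N (f ^ 2) g = 2 * (f * pb N f g) := by
  unfold pb
  simp only [Finset.mul_sum]
  refine Finset.sum_congr rfl fun k _ => ?_
  simp only [pderiv_pow]
  push_cast
  ring

lemma pderiv_inl_Lang (a i j : Fin N) :
    pderiv (Sum.inl a) (Lang N i j)
      = (if i = a then X (Sum.inr j) else 0) - (if j = a then X (Sum.inr i) else 0) := by
  simp only [Lang, map_sub, pderiv_mul, pderiv_X, Pi.single_apply]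
  by_cases h1 : i = a <;> by_cases h2 : j = a <;> simp [h1, h2]

lemma pderiv_inr_Lang (a i j : Fin N) :
    pderiv (Sum.inr a) (Lang N i j)
      = (if j = a then X (Sum.inl i) else 0) - (if i = a then X (Sum.inl j) else 0) := by
  simp only [Lang, map_sub, pderiv_mul, pderiv_X, Pi.single_apply]
  by_cases h1 : i = a <;> by_cases h2 : j = a <;> simp [h1, h2]

lemma pb_Lang (i j k l : Fin N) :
    pb N (Lang N i j) (Lang N k l) =
      (if k = i then Lang N j l else 0) + (if l = j then Lang N i k else 0)
      - (if l = i then Lang N j k else 0) - (if k = j then Lang N i l else 0) := by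
  unfold pb
  simp only [pderiv_inl_Lang, pderiv_inr_Lang, sub_mul, mul_sub, ite_mul, mul_ite,
    zero_mul, mul_zero, Finset.sum_sub_distrib, Finset.sum_ite_eq, Finset.mem_univ, if_true]
  by_cases h1 : i = k <;> by_cases h2 : i = l <;> by_cases h3 : j = k <;> by_cases h4 : j = l <;>
    simp_all [Lang, eq_comm] <;> ring

lemma Lang_self (i : Fin N) : Lang N i i = 0 := by
  simp [Lang]

/-- Collapse of the inner double sum against `pb_Lang`. -/
lemma inner_sum (m' : ℕ) (i j : Fin N) :
    (∑ k : Fin N, ∑ l : Fin N, if k < l ∧ (l : ℕ) < m' then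
        4 * (Lang N i j * Lang N k l * pb N (Lang N i j) (Lang N k l)) else 0)
    = ∑ a : Fin N,
       ((if i < a ∧ (a : ℕ) < m' then 4 * (Lang N i j * Lang N i a * Lang N j a) else 0)
      + (if a < j ∧ (j : ℕ) < m' then 4 * (Lang N i j * Lang N a j * Lang N i a) else 0)
      - (if a < i ∧ (i : ℕ) < m' then 4 * (Lang N i j * Lang N a i * Lang N j a) else 0)
      - (if j < a ∧ (a : ℕ) < m' then 4 * (Lang N i j * Lang N j a * Lang N i a) else 0)) := by
  have step1 : ∀ k l : Fin N,
      (if k < l ∧ (l : ℕ) < m' then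
        4 * (Lang N i j * Lang N k l * pb N (Lang N i j) (Lang N k l)) else 0)
      = (if k = i then (if k < l ∧ (l : ℕ) < m' then 4 * (Lang N i j * Lang N k l * Lang N j l) else 0) else 0)
      + (if l = j then (if k < l ∧ (l : ℕ) < m' then 4 * (Lang N i j * Lang N k l * Lang N i k) else 0) else 0)
      - (if l = i then (if k < l ∧ (l : ℕ) < m' then 4 * (Lang N i j * Lang N k l * Lang N j k) else 0) else 0)
      - (if k = j then (if k < l ∧ (l : ℕ) < m' then 4 * (Lang N i j * Lang N k l * Lang N i l) else 0) else 0) := by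
    intro k l
    rw [pb_Lang]
    split_ifs <;> ring
  calc (∑ k : Fin N, ∑ l : Fin N, if k < l ∧ (l : ℕ) < m' then
        4 * (Lang N i j * Lang N k l * pb N (Lang N i j) (Lang N k l)) else 0)
      = ∑ k : Fin N, ∑ l : Fin N,
        ((if k = i then (if k < l ∧ (l : ℕ) < m' then 4 * (Lang N i j * Lang N k l * Lang N j l) else 0) else 0)
      + (if l = j then (if k < l ∧ (l : ℕ) < m' then 4 * (Lang N i j * Lang N k l * Lang N i k) else 0) else 0)
      - (if l = i then (if k < l ∧ (l : ℕ) < m' then 4 * (Lang N i j * Lang N k l * Lang N j k) else 0) else 0)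
      - (if k = j then (if k < l ∧ (l : ℕ) < m' then 4 * (Lang N i j * Lang N k l * Lang N i l) else 0) else 0)) := by
        exact Finset.sum_congr rfl fun k _ => Finset.sum_congr rfl fun l _ => step1 k l
    _ = (∑ k : Fin N, ∑ l : Fin N, (if k = i then (if k < l ∧ (l : ℕ) < m' then 4 * (Lang N i j * Lang N k l * Lang N j l) else 0) else 0))
      + (∑ k : Fin N, ∑ l : Fin N, (if l = j then (if k < l ∧ (l : ℕ) < m' then 4 * (Lang N i j * Lang N k l * Lang N i k) else 0) else 0))
      - (∑ k : Fin N, ∑ l : Fin N, (if l = i then (if k < l ∧ (l : ℕ) < m' then 4 * (Lang N i j * Lang N k l * Lang N j k) else 0) else 0))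
      - (∑ k : Fin N, ∑ l : Fin N, (if k = j then (if k < l ∧ (l : ℕ) < m' then 4 * (Lang N i j * Lang N k l * Lang N i l) else 0) else 0)) := by
        simp [Finset.sum_add_distrib, Finset.sum_sub_distrib]
    _ = (∑ a : Fin N, if i < a ∧ (a : ℕ) < m' then 4 * (Lang N i j * Lang N i a * Lang N j a) else 0)
      + (∑ a : Fin N, if a < j ∧ (j : ℕ) < m' then 4 * (Lang N i j * Lang N a j * Lang N i a) else 0)
      - (∑ a : Fin N, if a < i ∧ (i : ℕ) < m' then 4 * (Lang N i j * Lang N a i * Lang N j a) else 0)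
      - (∑ a : Fin N, if j < a ∧ (a : ℕ) < m' then 4 * (Lang N i j * Lang N j a * Lang N i a) else 0) := by
        congr 1
        congr 1
        congr 1
        · rw [Finset.sum_comm]
          simp [Finset.sum_ite_eq', Finset.mem_univ]
        · simp [Finset.sum_ite_eq', Finset.mem_univ]
        · simp [Finset.sum_ite_eq', Finset.mem_univ]
        · rw [Finset.sum_comm]
          simp [Finset.sum_ite_eq', Finset.mem_univ]
    _ = _ := by
        simp [Finset.sum_add_distrib, Finset.sum_sub_distrib]

lemma key {m m' : ℕ} (h : m ≤ m') : pb N (Cm N m) (Cm N m') = 0 := by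
  unfold Cm
  simp only [pb_sum_left]
  simp only [pb_ite_left]
  simp only [pb_sum_right]
  simp only [pb_ite_right]
  simp only [pb_sq_sq]
  refine Finset.sum_eq_zero fun i _ => Finset.sum_eq_zero fun j _ => ?_
  by_cases hP : i < j ∧ (j : ℕ) < m
  · rw [if_pos hP, inner_sum]
    refine Finset.sum_eq_zero fun a _ => ?_
    obtain ⟨hij, hjm⟩ := hP
    rcases eq_or_ne a i with rfl | hai
    · simp [Lang_self]
    rcases eq_or_ne a j with rfl | haj
    · simp [Lang_self]
    have hai' : (a : ℕ) ≠ (i : ℕ) := fun hh => hai (Fin.ext hh)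
    have haj' : (a : ℕ) ≠ (j : ℕ) := fun hh => haj (Fin.ext hh)
    rw [Fin.lt_def] at hij
    simp only [Fin.lt_def]
    split_ifs <;> first | omega | (simp only [Lang]; ring1) | simp
  · rw [if_neg hP]

lemma pb_Lang_H (i j : Fin N) :
    pb N (Lang N i j) (∑ k : Fin N, X (Sum.inl k) * X (Sum.inr k)) = 0 := by
  unfold pb
  simp only [map_sum, pderiv_mul, pderiv_X, Pi.single_apply, pderiv_inl_Lang, pderiv_inr_Lang,
    Sum.inl.injEq, Sum.inr.injEq, reduceCtorEq, if_false, mul_zero, zero_mul, add_zero, zero_add,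
    mul_ite, ite_mul, mul_one, one_mul, sub_mul, mul_sub, Finset.mul_sum, Finset.sum_mul,
    Finset.sum_sub_distrib, Finset.sum_ite_eq, Finset.sum_ite_eq', Finset.mem_univ, if_true,
    Finset.sum_const_zero]
  ring

lemma pb_Lang_Q (i j : Fin N) :
    pb N (Lang N i j) (∑ k : Fin N, X (Sum.inl k) ^ 2) = 0 := by
  unfold pb
  simp only [map_sum, pderiv_pow, pderiv_mul, pderiv_X, Pi.single_apply, pderiv_inl_Lang,
    pderiv_inr_Lang, Sum.inl.injEq, Sum.inr.injEq, reduceCtorEq, if_false, mul_zero, zero_mul,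
    add_zero, zero_add, mul_ite, ite_mul, mul_one, one_mul, sub_mul, mul_sub, Finset.mul_sum,
    Finset.sum_mul, Finset.sum_sub_distrib, Finset.sum_ite_eq, Finset.sum_ite_eq',
    Finset.mem_univ, if_true, Finset.sum_const_zero]
  ring

lemma pb_Lang_P (i j : Fin N) :
    pb N (Lang N i j) (∑ k : Fin N, X (Sum.inr k) ^ 2) = 0 := by
  unfold pb
  simp only [map_sum, pderiv_pow, pderiv_mul, pderiv_X, Pi.single_apply, pderiv_inl_Lang,
    pderiv_inr_Lang, Sum.inl.injEq, Sum.inr.injEq, reduceCtorEq, if_false, mul_zero, zero_mul,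
    add_zero, zero_add, mul_ite, ite_mul, mul_one, one_mul, sub_mul, mul_sub, Finset.mul_sum,
    Finset.sum_mul, Finset.sum_sub_distrib, Finset.sum_ite_eq, Finset.sum_ite_eq',
    Finset.mem_univ, if_true, Finset.sum_const_zero]
  ring

lemma pb_Cm_of_Lang_zero {m : ℕ} {g : Poly N}
    (hg : ∀ i j : Fin N, pb N (Lang N i j) g = 0) : pb N (Cm N m) g = 0 := by
  unfold Cm
  simp only [pb_sum_left, pb_ite_left, pb_sq_left, hg, mul_zero, ite_self,
    Finset.sum_const_zero]

end Stmt15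

open Stmt15 in
/-- The functions `C^{(m)}` pairwise Poisson-commute, and each Poisson-commutes with
`H = Σ qₖpₖ`, `Q = Σ qₖ²` and `P = Σ pₖ²`. -/
theorem stmt_15 (N : ℕ) (m m' : ℕ) (hm : m ≤ N) (hm' : m' ≤ N) :
    pb N (Cm N m) (Cm N m') = 0 ∧
    pb N (Cm N m) (∑ k : Fin N, X (Sum.inl k) * X (Sum.inr k)) = 0 ∧
    pb N (Cm N m) (∑ k : Fin N, X (Sum.inl k) ^ 2) = 0 ∧
    pb N (Cm N m) (∑ k : Fin N, X (Sum.inr k) ^ 2) = 0 := by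
  refine ⟨?_, ?_, ?_, ?_⟩
  · rcases le_total m m' with h | h
    · exact key h
    · rw [pb_antisymm, key h, neg_zero]
  · exact pb_Cm_of_Lang_zero pb_Lang_H
  · exact pb_Cm_of_Lang_zero pb_Lang_Q
  · exact pb_Cm_of_Lang_zero pb_Lang_P
end

section
/- With L_{i₁…i_n} defined as the determinant of the n×n matrix with rows α^{(1)},…,α^{(n−2)}, q, p restricted to columns i₁,…,i_n, each function L_{i₁…i_n} Poisson-commutes with H = Σₖ qₖpₖ, with Q = Σₖ qₖ², with P = Σₖ pₖ², with Σₖ α^{(j)}ₖ qₖ, and with Σₖ α^{(j)}ₖ pₖ for every j = 1,…,n−2. -/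
open MvPolynomial Matrix

namespace Stmt17

variable (N : ℕ)

/-- Polynomial functions on `ℝ^{2N}`: `q k = X (inl k)`, `p k = X (inr k)`. -/
abbrev Poly (N : ℕ) := MvPolynomial (Fin N ⊕ Fin N) ℝ

/-- Canonical Poisson bracket `{f,g} = Σₖ (f_{qₖ} g_{pₖ} − g_{qₖ} f_{pₖ})`. -/
noncomputable def pb (f g : Poly N) : Poly N :=
  ∑ k : Fin N, (pderiv (Sum.inl k) f * pderiv (Sum.inr k) g -
    pderiv (Sum.inl k) g * pderiv (Sum.inr k) f)

/-- The building block `L_{i₁…i_n}`: the determinant of the `n×n` matrix whose rows are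
`α^{(1)},…,α^{(n−2)}, q, p` restricted to the columns `i₁ < … < i_n` (given by `idx`). -/
noncomputable def Lblock (n : ℕ) (α : Fin (n - 2) → Fin N → ℝ)
    (idx : Fin n → Fin N) : Poly N :=
  Matrix.det (Matrix.of fun r s : Fin n =>
    if hr : (r : ℕ) < n - 2 then C (α ⟨r, hr⟩ (idx s))
    else if (r : ℕ) = n - 2 then X (Sum.inl (idx s))
    else X (Sum.inr (idx s)))

end Stmt17

section Aux
open Finset
variable {R A : Type*} [CommRing R] [CommRing A] [Algebra R A]

lemma derivation_finset_prod (D : Derivation R A A) {ι : Type*} [DecidableEq ι]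
    (s : Finset ι) (f : ι → A) :
    D (∏ i ∈ s, f i) = ∑ i ∈ s, (∏ j ∈ s.erase i, f j) * D (f i) := by
  induction s using Finset.induction_on with
  | empty => simp
  | @insert a s ha ih =>
    rw [Finset.prod_insert ha, D.leibniz, ih, smul_eq_mul, smul_eq_mul, Finset.mul_sum,
      Finset.sum_insert ha, Finset.erase_insert ha, add_comm]
    congr 1
    refine Finset.sum_congr rfl fun i hi => ?_
    rw [Finset.erase_insert_of_ne (fun h : a = i => ha (h ▸ hi)),
      Finset.prod_insert (fun h => ha (Finset.mem_of_mem_erase h)), mul_assoc]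

lemma derivation_det (D : Derivation R A A) {m : ℕ} (M : Matrix (Fin m) (Fin m) A) :
    D M.det = ∑ r, (M.updateRow r fun j => D (M r j)).det := by
  classical
  rw [Matrix.det_apply, map_sum]
  simp only [Matrix.det_apply]
  rw [Finset.sum_comm]
  refine Finset.sum_congr rfl fun σ _ => ?_
  rw [Units.smul_def, map_zsmul, derivation_finset_prod, ← Units.smul_def]
  conv_rhs => rw [← Equiv.sum_comp σ]
  rw [smul_sum]
  refine Finset.sum_congr rfl fun i _ => ?_
  congr 1
  rw [← Finset.mul_prod_erase univ _ (mem_univ i), Matrix.updateRow_self, mul_comm]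
  congr 1
  refine Finset.prod_congr rfl fun j hj => ?_
  rw [Matrix.updateRow_ne (fun h => (Finset.ne_of_mem_erase hj) (σ.injective h))]

lemma det_updateRow_finsetSum {m : ℕ} (M : Matrix (Fin m) (Fin m) A) (j : Fin m)
    {ι : Type*} (s : Finset ι) (u : ι → Fin m → A) :
    (M.updateRow j (∑ k ∈ s, u k)).det = ∑ k ∈ s, (M.updateRow j (u k)).det := by
  classical
  induction s using Finset.induction_on with
  | empty =>
    simp only [Finset.sum_empty]
    exact Matrix.det_eq_zero_of_row_eq_zero j (by simp)
  | @insert a s ha ih =>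
    rw [Finset.sum_insert ha, Matrix.det_updateRow_add, ih, Finset.sum_insert ha]

end Aux

namespace Aux17
open Stmt17 Finset

variable {N n : ℕ} (α : Fin (n - 2) → Fin N → ℝ) (idx : Fin n → Fin N)

noncomputable def Mmat : Matrix (Fin n) (Fin n) (Poly N) :=
  Matrix.of fun r s : Fin n =>
    if hr : (r : ℕ) < n - 2 then C (α ⟨r, hr⟩ (idx s))
    else if (r : ℕ) = n - 2 then X (Sum.inl (idx s))
    else X (Sum.inr (idx s))

lemma Lblock_eq : Lblock N n α idx = (Mmat α idx).det := rfl

lemma row_at_q (hn : 2 ≤ n) (r : Fin n) (h : (r : ℕ) = n - 2) :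
    Mmat α idx r = fun s => X (Sum.inl (idx s)) := by
  funext s
  simp only [Mmat, Matrix.of_apply]
  rw [dif_neg (by omega), if_pos h]

lemma row_at_p (hn : 2 ≤ n) (r : Fin n) (h : (r : ℕ) = n - 1) :
    Mmat α idx r = fun s => X (Sum.inr (idx s)) := by
  funext s
  simp only [Mmat, Matrix.of_apply]
  rw [dif_neg (by omega), if_neg (by omega)]

lemma row_at_a (r : Fin n) (h : (r : ℕ) < n - 2) :
    Mmat α idx r = fun s => C (α ⟨r, h⟩ (idx s)) := by
  funext s
  simp only [Mmat, Matrix.of_apply]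
  rw [dif_pos h]

set_option maxHeartbeats 1000000 in
lemma sum_inl (hn : 2 ≤ n) (v : Fin N → Poly N) :
    ∑ k, v k * pderiv (Sum.inl k) (Lblock N n α idx)
      = ((Mmat α idx).updateRow ⟨n - 2, by omega⟩ fun s => v (idx s)).det := by
  have hd : ∀ k : Fin N, pderiv (Sum.inl k) (Lblock N n α idx)
      = ((Mmat α idx).updateRow ⟨n - 2, by omega⟩
          fun s => if idx s = k then (1 : Poly N) else 0).det := by
    intro k
    rw [Lblock_eq, derivation_det]
    rw [Finset.sum_eq_single (⟨n - 2, by omega⟩ : Fin n)]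
    · have : (fun s => (pderiv (Sum.inl k)) (Mmat α idx ⟨n - 2, by omega⟩ s))
          = fun s => if idx s = k then (1 : Poly N) else 0 := by
        funext s
        rw [congrFun (row_at_q α idx hn ⟨n - 2, by omega⟩ rfl) s, pderiv_X]
        simp [Pi.single_apply]
      rw [this]
    · intro r _ hr
      refine Matrix.det_eq_zero_of_row_eq_zero r fun s => ?_
      rw [Matrix.updateRow_self]
      by_cases h1 : (r : ℕ) < n - 2
      · rw [congrFun (row_at_a α idx r h1) s, pderiv_C]
      · have h2 : ¬((r : ℕ) = n - 2) := fun h => hr (Fin.ext h)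
        have h3 : (r : ℕ) = n - 1 := by have := r.isLt; omega
        rw [congrFun (row_at_p α idx hn r h3) s, pderiv_X_of_ne (by simp)]
    · intro h; exact absurd (Finset.mem_univ _) h
  calc ∑ k, v k * pderiv (Sum.inl k) (Lblock N n α idx)
      = ∑ k, ((Mmat α idx).updateRow ⟨n - 2, by omega⟩
          (v k • fun s => if idx s = k then (1 : Poly N) else 0)).det := by
        refine Finset.sum_congr rfl fun k _ => ?_
        rw [hd k, Matrix.det_updateRow_smul]
    _ = ((Mmat α idx).updateRow ⟨n - 2, by omega⟩
          (∑ k, v k • fun s => if idx s = k then (1 : Poly N) else 0)).det :=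
        (det_updateRow_finsetSum _ _ _ _).symm
    _ = _ := by
        refine congrArg Matrix.det (congrArg _ (funext fun s => ?_))
        rw [Finset.sum_apply]
        simp only [Pi.smul_apply, smul_eq_mul, mul_ite, mul_one, mul_zero]
        rw [Finset.sum_ite_eq]
        simp

set_option maxHeartbeats 1000000 in
lemma sum_inr (hn : 2 ≤ n) (v : Fin N → Poly N) :
    ∑ k, v k * pderiv (Sum.inr k) (Lblock N n α idx)
      = ((Mmat α idx).updateRow ⟨n - 1, by omega⟩ fun s => v (idx s)).det := by
  have hd : ∀ k : Fin N, pderiv (Sum.inr k) (Lblock N n α idx)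
      = ((Mmat α idx).updateRow ⟨n - 1, by omega⟩
          fun s => if idx s = k then (1 : Poly N) else 0).det := by
    intro k
    rw [Lblock_eq, derivation_det]
    rw [Finset.sum_eq_single (⟨n - 1, by omega⟩ : Fin n)]
    · have : (fun s => (pderiv (Sum.inr k)) (Mmat α idx ⟨n - 1, by omega⟩ s))
          = fun s => if idx s = k then (1 : Poly N) else 0 := by
        funext s
        rw [congrFun (row_at_p α idx hn ⟨n - 1, by omega⟩ rfl) s, pderiv_X]
        simp [Pi.single_apply]
      rw [this]
    · intro r _ hr
      refine Matrix.det_eq_zero_of_row_eq_zero r fun s => ?_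
      rw [Matrix.updateRow_self]
      by_cases h1 : (r : ℕ) < n - 2
      · rw [congrFun (row_at_a α idx r h1) s, pderiv_C]
      · by_cases h2 : (r : ℕ) = n - 2
        · rw [congrFun (row_at_q α idx hn r h2) s, pderiv_X_of_ne (by simp)]
        · exact absurd (Fin.ext (show (r : ℕ) = n - 1 by have := r.isLt; omega)) hr
    · intro h; exact absurd (Finset.mem_univ _) h
  calc ∑ k, v k * pderiv (Sum.inr k) (Lblock N n α idx)
      = ∑ k, ((Mmat α idx).updateRow ⟨n - 1, by omega⟩
          (v k • fun s => if idx s = k then (1 : Poly N) else 0)).det := by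
        refine Finset.sum_congr rfl fun k _ => ?_
        rw [hd k, Matrix.det_updateRow_smul]
    _ = ((Mmat α idx).updateRow ⟨n - 1, by omega⟩
          (∑ k, v k • fun s => if idx s = k then (1 : Poly N) else 0)).det :=
        (det_updateRow_finsetSum _ _ _ _).symm
    _ = _ := by
        refine congrArg Matrix.det (congrArg _ (funext fun s => ?_))
        rw [Finset.sum_apply]
        simp only [Pi.smul_apply, smul_eq_mul, mul_ite, mul_one, mul_zero]
        rw [Finset.sum_ite_eq]
        simp


end Aux17

open Stmt17 Aux17 in
/-- Each building block `L_{i₁…i_n}` Poisson-commutes with `H = Σ qₖpₖ`,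
`Q = Σ qₖ²`, `P = Σ pₖ²`, `Σₖ α^{(j)}ₖ qₖ` and `Σₖ α^{(j)}ₖ pₖ`. -/
theorem stmt_17 (N n : ℕ) (hn : 2 ≤ n) (hN : n ≤ N)
    (α : Fin (n - 2) → Fin N → ℝ) (idx : Fin n → Fin N) (hidx : StrictMono idx) :
    pb N (Lblock N n α idx) (∑ k : Fin N, X (Sum.inl k) * X (Sum.inr k)) = 0 ∧
    pb N (Lblock N n α idx) (∑ k : Fin N, X (Sum.inl k) ^ 2) = 0 ∧
    pb N (Lblock N n α idx) (∑ k : Fin N, X (Sum.inr k) ^ 2) = 0 ∧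
    (∀ j : Fin (n - 2),
      pb N (Lblock N n α idx) (∑ k : Fin N, C (α j k) * X (Sum.inl k)) = 0) ∧
    (∀ j : Fin (n - 2),
      pb N (Lblock N n α idx) (∑ k : Fin N, C (α j k) * X (Sum.inr k)) = 0) := by
  set L := Lblock N n α idx with hL
  have hqp : (⟨n - 2, by omega⟩ : Fin n) ≠ ⟨n - 1, by omega⟩ := by
    simp only [ne_eq, Fin.mk.injEq]; omega
  have E1 : ∑ k, X (Sum.inl k) * pderiv (Sum.inl k) L = L := by
    rw [hL, sum_inl α idx hn,
      show (fun s => (X (Sum.inl (idx s)) : Poly N)) = Mmat α idx ⟨n - 2, by omega⟩ from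
        (row_at_q α idx hn _ rfl).symm,
      Matrix.updateRow_eq_self, ← Lblock_eq]
  have E2 : ∑ k, X (Sum.inr k) * pderiv (Sum.inr k) L = L := by
    rw [hL, sum_inr α idx hn,
      show (fun s => (X (Sum.inr (idx s)) : Poly N)) = Mmat α idx ⟨n - 1, by omega⟩ from
        (row_at_p α idx hn _ rfl).symm,
      Matrix.updateRow_eq_self, ← Lblock_eq]
  have E3 : ∑ k, X (Sum.inl k) * pderiv (Sum.inr k) L = 0 := by
    rw [hL, sum_inr α idx hn,
      show (fun s => (X (Sum.inl (idx s)) : Poly N)) = Mmat α idx ⟨n - 2, by omega⟩ from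
        (row_at_q α idx hn _ rfl).symm]
    exact Matrix.det_updateRow_eq_zero hqp
  have E4 : ∑ k, X (Sum.inr k) * pderiv (Sum.inl k) L = 0 := by
    rw [hL, sum_inl α idx hn,
      show (fun s => (X (Sum.inr (idx s)) : Poly N)) = Mmat α idx ⟨n - 1, by omega⟩ from
        (row_at_p α idx hn _ rfl).symm]
    exact Matrix.det_updateRow_eq_zero hqp.symm
  have E5 : ∀ j : Fin (n - 2), ∑ k, C (α j k) * pderiv (Sum.inr k) L = 0 := by
    intro j
    rw [hL, sum_inr α idx hn,
      show (fun s => (C (α j (idx s)) : Poly N))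
          = Mmat α idx ⟨(j : ℕ), by omega⟩ from by
        rw [row_at_a α idx ⟨(j : ℕ), by omega⟩ j.isLt]]
    refine Matrix.det_updateRow_eq_zero ?_
    have := j.isLt
    simp only [ne_eq, Fin.mk.injEq]; omega
  have E6 : ∀ j : Fin (n - 2), ∑ k, C (α j k) * pderiv (Sum.inl k) L = 0 := by
    intro j
    rw [hL, sum_inl α idx hn,
      show (fun s => (C (α j (idx s)) : Poly N))
          = Mmat α idx ⟨(j : ℕ), by omega⟩ from by
        rw [row_at_a α idx ⟨(j : ℕ), by omega⟩ j.isLt]]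
    refine Matrix.det_updateRow_eq_zero ?_
    have := j.isLt
    simp only [ne_eq, Fin.mk.injEq]; omega
  refine ⟨?_, ?_, ?_, ?_, ?_⟩
  · have dgl : ∀ k : Fin N, pderiv (Sum.inl k)
        (∑ j : Fin N, X (Sum.inl j) * X (Sum.inr j) : Poly N) = X (Sum.inr k) := by
      intro k
      rw [map_sum]
      simp [pderiv_mul, Pi.single_apply, Finset.sum_ite_eq]
    have dgr : ∀ k : Fin N, pderiv (Sum.inr k)
        (∑ j : Fin N, X (Sum.inl j) * X (Sum.inr j) : Poly N) = X (Sum.inl k) := by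
      intro k
      rw [map_sum]
      simp [pderiv_mul, Pi.single_apply, Finset.sum_ite_eq]
    rw [pb]
    simp only [dgl, dgr]
    rw [Finset.sum_sub_distrib,
      show ∑ k, pderiv (Sum.inl k) L * X (Sum.inl k)
          = ∑ k, X (Sum.inl k) * pderiv (Sum.inl k) L from
        Finset.sum_congr rfl fun k _ => mul_comm _ _,
      E1, E2, sub_self]
  · have dgl : ∀ k : Fin N, pderiv (Sum.inl k)
        (∑ j : Fin N, X (Sum.inl j) ^ 2 : Poly N) = 2 * X (Sum.inl k) := by
      intro k
      rw [map_sum]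
      simp [pderiv_pow, Pi.single_apply, Finset.sum_ite_eq, mul_ite]
    have dgr : ∀ k : Fin N, pderiv (Sum.inr k)
        (∑ j : Fin N, X (Sum.inl j) ^ 2 : Poly N) = 0 := by
      intro k
      rw [map_sum]
      simp [pderiv_pow, Pi.single_apply]
    rw [pb]
    simp only [dgl, dgr, mul_zero, zero_sub]
    rw [Finset.sum_neg_distrib,
      show ∑ k, 2 * X (Sum.inl k) * pderiv (Sum.inr k) L
          = 2 * ∑ k, X (Sum.inl k) * pderiv (Sum.inr k) L by
        rw [Finset.mul_sum]; exact Finset.sum_congr rfl fun k _ => by ring,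
      E3, mul_zero, neg_zero]
  · have dgl : ∀ k : Fin N, pderiv (Sum.inl k)
        (∑ j : Fin N, X (Sum.inr j) ^ 2 : Poly N) = 0 := by
      intro k
      rw [map_sum]
      simp [pderiv_pow, Pi.single_apply]
    have dgr : ∀ k : Fin N, pderiv (Sum.inr k)
        (∑ j : Fin N, X (Sum.inr j) ^ 2 : Poly N) = 2 * X (Sum.inr k) := by
      intro k
      rw [map_sum]
      simp [pderiv_pow, Pi.single_apply, Finset.sum_ite_eq, mul_ite]
    rw [pb]
    simp only [dgl, dgr, zero_mul, sub_zero]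
    rw [show ∑ k, pderiv (Sum.inl k) L * (2 * X (Sum.inr k))
          = 2 * ∑ k, X (Sum.inr k) * pderiv (Sum.inl k) L by
        rw [Finset.mul_sum]; exact Finset.sum_congr rfl fun k _ => by ring,
      E4, mul_zero]
  · intro j
    have dgl : ∀ k : Fin N, pderiv (Sum.inl k)
        (∑ j' : Fin N, C (α j j') * X (Sum.inl j') : Poly N) = C (α j k) := by
      intro k
      rw [map_sum]
      simp [pderiv_C_mul, Pi.single_apply, Finset.sum_ite_eq, mul_ite]
    have dgr : ∀ k : Fin N, pderiv (Sum.inr k)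
        (∑ j' : Fin N, C (α j j') * X (Sum.inl j') : Poly N) = 0 := by
      intro k
      rw [map_sum]
      simp [pderiv_C_mul, Pi.single_apply]
    rw [pb]
    simp only [dgl, dgr, mul_zero, zero_sub]
    rw [Finset.sum_neg_distrib, E5 j, neg_zero]
  · intro j
    have dgl : ∀ k : Fin N, pderiv (Sum.inl k)
        (∑ j' : Fin N, C (α j j') * X (Sum.inr j') : Poly N) = 0 := by
      intro k
      rw [map_sum]
      simp [pderiv_C_mul, Pi.single_apply]
    have dgr : ∀ k : Fin N, pderiv (Sum.inr k)
        (∑ j' : Fin N, C (α j j') * X (Sum.inr j') : Poly N) = C (α j k) := by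
      intro k
      rw [map_sum]
      simp [pderiv_C_mul, Pi.single_apply, Finset.sum_ite_eq, mul_ite]
    rw [pb]
    simp only [dgl, dgr, zero_mul, sub_zero]
    rw [show ∑ k, pderiv (Sum.inl k) L * C (α j k)
          = ∑ k, C (α j k) * pderiv (Sum.inl k) L from
        Finset.sum_congr rfl fun k _ => mul_comm _ _,
      E6 j]
end

section
/- The quartic polynomial −det of the symmetric 4×4 matrix [[z₁₁, z₁₂, −u₋, u₊],[z₁₂, z₂₂, −v₋, v₊],[−u₋, −v₋, −2x₋, h],[u₊, v₊, h, 2x₊]] is annihilated by the derivation of the polynomial ring in the ten variables h, x₋, x₊, u±, v±, z₁₁, z₁₂, z₂₂ defined by X₋: h ↦ 2x₋, x₊ ↦ −h, u₊ ↦ u₋, v₊ ↦ v₋, all other variables ↦ 0. -/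
/-!
Applied entrywise, the derivation acts on the Casimir matrix `M` as `D M = A M + M Aᵀ` with
`A = -E₄₃`, the infinitesimal coadjoint action of `x₋`. Over the dual numbers this says
`M + ε D M = T M Tᵀ` for the transvection `T = 1 + ε A`, which has determinant `1`; hence
`det M + ε D (det M) = det (M + ε D M) = det M`, that is, `D (det M) = 0`.
-/

open MvPolynomial Matrix TrivSqZeroExt DualNumber

namespace Derivation

variable {R A : Type*} [CommSemiring R] [CommRing A] [Algebra R A]

def toDualNumber (D : Derivation R A A) : A →+* A[ε] where
  toFun a := inl a + inr (D a)
  map_one' := by ext <;> simp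
  map_mul' a b := by ext <;> simp [mul_comm]
  map_zero' := by ext <;> simp
  map_add' a b := by ext <;> simp [add_add_add_comm]

theorem toDualNumber_apply (D : Derivation R A A) (a : A) :
    D.toDualNumber a = inl a + ε * inl (D a) := by
  simp [toDualNumber, inr_eq_smul_eps, Algebra.smul_def, mul_comm, algebraMap_eq_inl]

variable {n : Type*} [Fintype n] [DecidableEq n]

theorem toDualNumber_mapMatrix_eq_transvection_mul_mul_transpose (D : Derivation R A A)
    (M : Matrix n n A) (i j : n) (c : A)
    (hM : M.map D = single i j c * M + M * (single i j c)ᵀ) :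
    D.toDualNumber.mapMatrix M =
      transvection i j (inl c * ε) * (inlHom A A).mapMatrix M *
        (transvection i j (inl c * ε))ᵀ := by
  set ι := inlHom A A
  have hT : transvection i j (ι c * ε) = 1 + (ε : A[ε]) • ι.mapMatrix (single i j c) := by
    rw [transvection, RingHom.mapMatrix_apply, map_single, smul_single, smul_eq_mul, mul_comm]
  have hD : D.toDualNumber.mapMatrix M = ι.mapMatrix M + (ε : A[ε]) • ι.mapMatrix (M.map D) := by
    ext k l : 1
    simp [toDualNumber_apply, ι]
  rw [show inl c = ι c from rfl, hT, hD, hM]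
  simp only [map_add, map_mul, transpose_add, transpose_one, transpose_smul, add_mul, mul_add,
    one_mul, mul_one, smul_mul_assoc, mul_smul_comm, smul_smul, eps_mul_eps, zero_smul, smul_add,
    RingHom.mapMatrix_apply, transpose_map]
  abel

theorem map_det_eq_zero_of_map_eq_single_mul_add_mul_transpose (D : Derivation R A A)
    (M : Matrix n n A) {i j : n} (hij : i ≠ j) (c : A)
    (hM : M.map D = single i j c * M + M * (single i j c)ᵀ) : D M.det = 0 := by
  have h := congrArg TrivSqZeroExt.snd (D.toDualNumber.map_det M)
  rw [D.toDualNumber_mapMatrix_eq_transvection_mul_mul_transpose M i j c hM, det_mul, det_mul,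
    det_transpose, det_transvection_of_ne _ _ hij, one_mul, mul_one, ← RingHom.map_det] at h
  simpa [toDualNumber] using h

end Derivation

theorem stmt_18_general {K : Type*} [Field K]
    (D : Derivation K (MvPolynomial (Fin 10) K) (MvPolynomial (Fin 10) K))
    (h0 : D (X 0) = 2 * X 1) (h1 : D (X 1) = 0) (h2 : D (X 2) = -X 0)
    (h3 : D (X 3) = 0) (h4 : D (X 4) = X 3)
    (h5 : D (X 5) = 0) (h6 : D (X 6) = X 5)
    (h7 : D (X 7) = 0) (h8 : D (X 8) = 0) (h9 : D (X 9) = 0) :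
    D (-Matrix.det !![X 7, X 8, -X 3, X 4;
                      X 8, X 9, -X 5, X 6;
                      -X 3, -X 5, -(2 * X 1), X 0;
                      X 4, X 6, X 0, 2 * X 2]) = 0 := by
  rw [map_neg, neg_eq_zero]
  refine D.map_det_eq_zero_of_map_eq_single_mul_add_mul_transpose _ (i := 3) (j := 2)
    (by decide) (-1) ?_
  ext i j : 1
  fin_cases i <;> fin_cases j <;>
    simp [two_mul, h0, h1, h2, h3, h4, h5, h6, h7, h8, h9, mul_apply, vecMul, dotProduct, single]

/-- The coadjoint derivation of `x₋` in `g₄` annihilates the quartic Casimir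
`−det [[z₁₁, z₁₂, −u₋, u₊],[z₁₂, z₂₂, −v₋, v₊],[−u₋, −v₋, −2x₋, h],[u₊, v₊, h, 2x₊]]`.
Variables of `K[h, x₋, x₊, u₋, u₊, v₋, v₊, z₁₁, z₁₂, z₂₂]` are `X 0, …, X 9` in this
order; the derivation sends `h ↦ 2x₋`, `x₊ ↦ −h`, `u₊ ↦ u₋`, `v₊ ↦ v₋` and every other
variable to `0`. -/
theorem stmt_18 {K : Type*} [Field K] [CharZero K]
    (D : Derivation K (MvPolynomial (Fin 10) K) (MvPolynomial (Fin 10) K))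
    (h0 : D (X 0) = 2 * X 1) (h1 : D (X 1) = 0) (h2 : D (X 2) = -X 0)
    (h3 : D (X 3) = 0) (h4 : D (X 4) = X 3)
    (h5 : D (X 5) = 0) (h6 : D (X 6) = X 5)
    (h7 : D (X 7) = 0) (h8 : D (X 8) = 0) (h9 : D (X 9) = 0) :
    D (-Matrix.det !![X 7, X 8, -X 3, X 4;
                      X 8, X 9, -X 5, X 6;
                      -X 3, -X 5, -(2 * X 1), X 0;
                      X 4, X 6, X 0, 2 * X 2]) = 0 :=
  stmt_18_general D h0 h1 h2 h3 h4 h5 h6 h7 h8 h9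
end
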